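/- Let α < β be real numbers, and let X, U, R, Q > 0 and Y ≥ 1. Let w : ℝ → ℂ be a smooth function supported on [α, β] satisfying |w^{(j)}(t)| ≤ X·U^{−j} for all t ∈ ℝ and all integers j ≥ 0. Let h : ℝ → ℝ be a smooth function such that |h′(t)| ≥ R for all t ∈ [α, β] and |h^{(j)}(t)| ≤ Y·Q^{−j} for all t ∈ [α, β] and all integers j ≥ 2. Then for every A > 0 there exists a constant C depending only on A such that |∫_ℝ w(t) e^{i h(t)} dt| ≤ C · (β − α) · X · [ (Q R / √Y)^{−A} + (R U)^{−A} ]. -/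

import Mathlib

open MeasureTheory Set Filter Topology Complex
open scoped ContDiff Manifold

/-!
Put `V = min U (Q / √Y)`. Every derivative of `w` costs at most a factor `V⁻¹`. Let `g` agree
with `1 / h'` near `[α, β]`; integrating by parts, `∫ Φ e^{ih} = i ∫ (g Φ)' e^{ih}`. Since `g`
solves the Riccati equation `g' = -h'' g²` and `|h^{(j+2)}| ≤ R V^{-(j+1)}` once `RV ≥ 1`, its
`j`-th derivative is `O(R⁻¹ V^{-j})`, so each integration by parts gains a factor `(RV)⁻¹`;
`⌈A⌉` of them give the bound. When `RV ≤ 1` the trivial bound `X (β - α)` suffices.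
-/

def DerivBoundedOn {F : Type*} [NormedAddCommGroup F] [NormedSpace ℝ F] (n : ℕ) (f : ℝ → F)
    (s : Set ℝ) (M L : ℝ) : Prop :=
  ∀ j ≤ n, ∀ t ∈ s, ‖iteratedDeriv j f t‖ ≤ M * L ^ j

namespace DerivBoundedOn

variable {F : Type*} [NormedAddCommGroup F] [NormedSpace ℝ F] {n : ℕ} {f : ℝ → F} {s : Set ℝ}
  {M L : ℝ}

lemma norm_le (hf : DerivBoundedOn n f s M L) {t : ℝ} (ht : t ∈ s) : ‖f t‖ ≤ M := by
  simpa using hf 0 (Nat.zero_le n) t ht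

lemma mono {M' : ℝ} (hf : DerivBoundedOn n f s M L) (hM : M ≤ M') (hL : 0 ≤ L) :
    DerivBoundedOn n f s M' L := fun j hj t ht =>
  (hf j hj t ht).trans (mul_le_mul_of_nonneg_right hM (pow_nonneg hL j))

protected lemma deriv (hf : DerivBoundedOn (n + 1) f s M L) :
    DerivBoundedOn n (deriv f) s (M * L) L := by
  intro j hj t ht
  rw [← iteratedDeriv_succ', mul_assoc, ← pow_succ']
  exact hf (j + 1) (by omega) t ht

lemma succ_of_deriv_eventuallyEq {g : ℝ → F} (h0 : ∀ t ∈ s, ‖f t‖ ≤ M)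
    (hfg : deriv f =ᶠ[𝓝ˢ s] g) (hg : DerivBoundedOn n g s (M * L) L) :
    DerivBoundedOn (n + 1) f s M L := by
  rintro (_ | j) hj t ht
  · simpa using h0 t ht
  · rw [iteratedDeriv_succ', (hfg.filter_mono (nhds_le_nhdsSet ht)).iteratedDeriv_eq, pow_succ',
      ← mul_assoc]
    exact hg j (by omega) t ht

lemma smul {g : ℝ → ℝ} {A B : ℝ} (hg : ContDiff ℝ n g) (hf : ContDiff ℝ n f)
    (hgb : DerivBoundedOn n g s A L) (hfb : DerivBoundedOn n f s B L) :
    DerivBoundedOn n (fun t => g t • f t) s (2 ^ n * A * B) L := by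
  intro j hj t ht
  have hA : 0 ≤ A := (norm_nonneg _).trans (hgb.norm_le ht)
  have hBL : ∀ i ≤ n, 0 ≤ B * L ^ i := fun i hi => (norm_nonneg _).trans (hfb i hi t ht)
  have leibniz := norm_iteratedFDeriv_smul_le hg hf t (n := j) (by exact_mod_cast hj)
  simp only [norm_iteratedFDeriv_eq_norm_iteratedDeriv] at leibniz
  calc _ ≤ _ := leibniz
    _ ≤ ∑ i ∈ Finset.range (j + 1), (j.choose i : ℝ) * (A * B * L ^ j) := by
      refine Finset.sum_le_sum fun i hi => ?_
      have hij : i ≤ j := Nat.lt_succ_iff.mp (Finset.mem_range.mp hi)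
      rw [show A * B * L ^ j = A * L ^ i * (B * L ^ (j - i)) by
        rw [← Nat.add_sub_cancel' hij, pow_add, Nat.add_sub_cancel_left]; ring, ← mul_assoc]
      gcongr
      · exact mul_nonneg (Nat.cast_nonneg _) ((norm_nonneg _).trans (hgb i (by omega) t ht))
      · exact hgb i (by omega) t ht
      · exact hfb (j - i) (by omega) t ht
    _ = 2 ^ j * A * B * L ^ j := by
      rw [← Finset.sum_mul, ← Nat.cast_sum, Nat.sum_range_choose]; push_cast; ring
    _ ≤ 2 ^ n * A * B * L ^ j := by
      simp only [mul_assoc]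
      exact mul_le_mul_of_nonneg_right (pow_le_pow_right₀ one_le_two hj)
        (mul_nonneg hA (hBL j hj))

protected lemma neg (hf : DerivBoundedOn n f s M L) : DerivBoundedOn n (fun t => -f t) s M L := by
  intro j hj t ht
  rw [iteratedDeriv_fun_neg, norm_neg]
  exact hf j hj t ht

end DerivBoundedOn

def riccatiConst : ℕ → ℝ
  | 0 => 1
  | n + 1 => 4 ^ n * riccatiConst n ^ 2

lemma one_le_riccatiConst (n : ℕ) : 1 ≤ riccatiConst n := by
  induction n with
  | zero => exact le_rfl
  | succ n ih => exact one_le_mul_of_one_le_of_one_le (one_le_pow₀ (by norm_num)) (one_le_pow₀ ih)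

lemma derivBoundedOn_of_deriv_eq_mul_sq {G H : ℝ → ℝ} {s : Set ℝ} {M B L : ℝ}
    (hG : ContDiff ℝ ∞ G) (hH : ContDiff ℝ ∞ H)
    (hode : deriv G =ᶠ[𝓝ˢ s] fun t => H t * (G t * G t)) (hG0 : ∀ t ∈ s, ‖G t‖ ≤ M)
    (hHb : ∀ n, DerivBoundedOn n H s B L) (hBM : B * M ≤ L) (hM : 0 ≤ M) (hL : 0 ≤ L) (n : ℕ) :
    DerivBoundedOn n G s (riccatiConst n * M) L := by
  induction n with
  | zero =>
    intro j hj t ht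
    obtain rfl := Nat.le_zero.mp hj
    simpa [riccatiConst] using hG0 t ht
  | succ n ih =>
    refine DerivBoundedOn.succ_of_deriv_eventuallyEq (fun t ht => ?_) hode ?_
    · exact (hG0 t ht).trans (le_mul_of_one_le_left hM (one_le_riccatiConst _))
    · have hGG := ih.smul (contDiff_infty.mp hG n) (contDiff_infty.mp hG n) ih
      have hHGG := (hHb n).smul (contDiff_infty.mp hH n) (contDiff_infty.mp (hG.mul hG) n) hGG
      simp only [smul_eq_mul] at hHGG
      refine hHGG.mono ?_ hL
      calc 2 ^ n * B * (2 ^ n * (riccatiConst n * M) * (riccatiConst n * M))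
          = 4 ^ n * riccatiConst n ^ 2 * M * (B * M) := by
            rw [show (4 : ℝ) = 2 * 2 by norm_num, mul_pow]; ring
        _ ≤ 4 ^ n * riccatiConst n ^ 2 * M * L :=
            mul_le_mul_of_nonneg_left hBM (mul_nonneg (by positivity) hM)

lemma exists_contDiff_eventuallyEq_inv {E : Type*} [NormedAddCommGroup E] [NormedSpace ℝ E]
    [FiniteDimensional ℝ E] {n : ℕ∞} {f : E → ℝ} (hf : ContDiff ℝ n f) {K : Set E}
    (hK : IsClosed K) (hfK : ∀ x ∈ K, f x ≠ 0) :
    ∃ g : E → ℝ, ContDiff ℝ n g ∧ g =ᶠ[𝓝ˢ K] fun x => (f x)⁻¹ := by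
  obtain ⟨χ, hχ0, hχ1, -⟩ := exists_contMDiffMap_zero_one_nhds_of_isClosed 𝓘(ℝ, E) (n := n)
    (isClosed_singleton.preimage hf.continuous) hK
    (disjoint_left.mpr fun x hx hxK => hfK x hxK hx)
  refine ⟨fun x => χ x / f x, contDiff_iff_contDiffAt.mpr fun x => ?_, ?_⟩
  · by_cases hx : f x = 0
    · exact (contDiffAt_const (c := 0)).congr_of_eventuallyEq <| by
        filter_upwards [hχ0.filter_mono (nhds_le_nhdsSet (s := f ⁻¹' {0}) hx)] with y hy
        simp [hy]
    · exact χ.contMDiff.contDiff.contDiffAt.div hf.contDiffAt hx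
  · filter_upwards [hχ1] with x hx
    simp [hx]

lemma deriv_eventuallyEq_of_eventuallyEq_inv {f g : ℝ → ℝ} {K : Set ℝ} (hf : ContDiff ℝ 1 f)
    (hfK : ∀ x ∈ K, f x ≠ 0) (hg : g =ᶠ[𝓝ˢ K] fun x => (f x)⁻¹) :
    deriv g =ᶠ[𝓝ˢ K] fun x => -deriv f x * (g x * g x) := by
  have hf0 : ∀ᶠ x in 𝓝ˢ K, f x ≠ 0 :=
    (isOpen_ne_fun hf.continuous continuous_const).mem_nhdsSet.mpr hfK
  filter_upwards [hg, hg.eventually_nhdsSet, hf0] with x hx hgx hfx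
  rw [EventuallyEq.deriv_eq (f := fun y => (f y)⁻¹) hgx,
    deriv_fun_inv'' (hf.differentiable one_ne_zero x) hfx, hx]
  field_simp

noncomputable def ibpStep (g : ℝ → ℝ) (Φ : ℝ → ℂ) : ℝ → ℂ :=
  deriv fun t => g t • Φ t

lemma integral_mul_exp_eq_I_mul_integral_ibpStep {g h : ℝ → ℝ} {Φ : ℝ → ℂ}
    (hg : ContDiff ℝ 1 g) (hΦ : ContDiff ℝ 1 Φ) (hh : ContDiff ℝ 1 h)
    (hΦc : HasCompactSupport Φ) (hgh : ∀ t ∈ Function.support Φ, g t * deriv h t = 1) :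
    ∫ t, Φ t * exp (I * h t) = I * ∫ t, ibpStep g Φ t * exp (I * h t) := by
  let u : ℝ → ℂ := fun t => g t • Φ t
  let v : ℝ → ℂ := fun t => exp (I * h t)
  let v' : ℝ → ℂ := fun t => v t * (I * deriv h t)
  have hu : ContDiff ℝ 1 u := hg.smul hΦ
  have huc : HasCompactSupport u := hΦc.smul_left (f := g)
  have hv : Continuous v := (continuous_const.mul (continuous_ofReal.comp hh.continuous)).cexp
  have hv' : ∀ t, HasDerivAt v (v' t) t := fun t =>
    ((hh.differentiable one_ne_zero t).hasDerivAt.ofReal_comp.const_mul I).cexp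
  have huv' : ∀ t, u t * v' t = I * (Φ t * v t) := fun t => by
    by_cases ht : Φ t = 0
    · simp [u, ht]
    · calc u t * v' t = I * (Φ t * v t) * ((g t * deriv h t : ℝ) : ℂ) := by
            simp only [u, v', Complex.real_smul]; push_cast; ring
        _ = I * (Φ t * v t) := by rw [hgh t ht]; simp
  have hint_uv' : Integrable (u * v') :=
    (hu.continuous.mul (hv.mul (continuous_const.mul (continuous_ofReal.comp
      (hh.continuous_deriv le_rfl))))).integrable_of_hasCompactSupport huc.mul_right
  have hint_u'v : Integrable (deriv u * v) :=
    ((hu.continuous_deriv le_rfl).mul hv).integrable_of_hasCompactSupport huc.deriv.mul_right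
  have hint_uv : Integrable (u * v) :=
    (hu.continuous.mul hv).integrable_of_hasCompactSupport huc.mul_right
  have key : ∫ t, u t * v' t = -∫ t, deriv u t * v t :=
    integral_mul_deriv_eq_deriv_mul_of_integrable
      (fun t _ => (hu.differentiable one_ne_zero t).hasDerivAt) (fun t _ => hv' t)
      hint_uv' hint_u'v hint_uv
  simp only [huv', integral_const_mul] at key
  change ∫ t, Φ t * v t = I * ∫ t, deriv u t * v t
  linear_combination (-I) * key + (∫ t, Φ t * v t) * I_mul_I

lemma contDiff_ibpStep {g : ℝ → ℝ} {Φ : ℝ → ℂ} (hg : ContDiff ℝ ∞ g) (hΦ : ContDiff ℝ ∞ Φ) :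
    ContDiff ℝ ∞ (ibpStep g Φ) :=
  (contDiff_infty_iff_deriv.mp (hg.smul hΦ)).2

lemma tsupport_ibpStep_subset (g : ℝ → ℝ) (Φ : ℝ → ℂ) : tsupport (ibpStep g Φ) ⊆ tsupport Φ :=
  closure_minimal (support_deriv_subset.trans (tsupport_smul_subset_right g Φ)) isClosed_closure

lemma contDiff_iterate_ibpStep {g : ℝ → ℝ} {Φ : ℝ → ℂ} (hg : ContDiff ℝ ∞ g)
    (hΦ : ContDiff ℝ ∞ Φ) (m : ℕ) : ContDiff ℝ ∞ ((ibpStep g)^[m] Φ) := by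
  induction m with
  | zero => exact hΦ
  | succ m ih => rw [Function.iterate_succ_apply']; exact contDiff_ibpStep hg ih

lemma tsupport_iterate_ibpStep_subset (g : ℝ → ℝ) (Φ : ℝ → ℂ) (m : ℕ) :
    tsupport ((ibpStep g)^[m] Φ) ⊆ tsupport Φ := by
  induction m with
  | zero => exact subset_rfl
  | succ m ih => rw [Function.iterate_succ_apply']; exact (tsupport_ibpStep_subset _ _).trans ih

lemma integral_mul_exp_eq_I_pow_mul_integral_iterate_ibpStep {g h : ℝ → ℝ} {Φ : ℝ → ℂ}
    {K : Set ℝ} (hK : IsCompact K) (hg : ContDiff ℝ ∞ g) (hΦ : ContDiff ℝ ∞ Φ)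
    (hh : ContDiff ℝ 1 h) (hΦK : tsupport Φ ⊆ K) (hgh : ∀ t ∈ K, g t * deriv h t = 1) (m : ℕ) :
    ∫ t, Φ t * exp (I * h t) = I ^ m * ∫ t, (ibpStep g)^[m] Φ t * exp (I * h t) := by
  induction m with
  | zero => simp
  | succ m ih =>
    have hK' : tsupport ((ibpStep g)^[m] Φ) ⊆ K := (tsupport_iterate_ibpStep_subset g Φ m).trans hΦK
    rw [ih, integral_mul_exp_eq_I_mul_integral_ibpStep (hg.of_le (by simp))
      ((contDiff_iterate_ibpStep hg hΦ m).of_le (by simp)) hh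
      (hK.of_isClosed_subset isClosed_closure hK') (fun t ht => hgh t (hK' (subset_tsupport _ ht))),
      Function.iterate_succ_apply', pow_succ, mul_assoc]

noncomputable def ibpConst : ℕ → ℕ → ℝ
  | 0, _ => 1
  | m + 1, n => 2 ^ (n + 1) * riccatiConst (n + 1) * ibpConst m (n + 1)

lemma one_le_ibpConst (m n : ℕ) : 1 ≤ ibpConst m n := by
  induction m generalizing n with
  | zero => exact le_rfl
  | succ m ih =>
    exact one_le_mul_of_one_le_of_one_le
      (one_le_mul_of_one_le_of_one_le (one_le_pow₀ one_le_two) (one_le_riccatiConst _)) (ih _)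

lemma DerivBoundedOn.ibpStep {g : ℝ → ℝ} {Φ : ℝ → ℂ} {s : Set ℝ} {n : ℕ} {A B L : ℝ}
    (hg : ContDiff ℝ (n + 1) g) (hΦ : ContDiff ℝ (n + 1) Φ)
    (hgb : DerivBoundedOn (n + 1) g s A L) (hΦb : DerivBoundedOn (n + 1) Φ s B L) :
    DerivBoundedOn n (ibpStep g Φ) s (2 ^ (n + 1) * A * B * L) L :=
  (hgb.smul hg hΦ hΦb).deriv

lemma derivBoundedOn_iterate_ibpStep {g : ℝ → ℝ} {Φ : ℝ → ℂ} {s : Set ℝ} {M X L : ℝ}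
    (hg : ContDiff ℝ ∞ g) (hΦ : ContDiff ℝ ∞ Φ)
    (hgb : ∀ n, DerivBoundedOn n g s (riccatiConst n * M) L) (hΦb : ∀ n, DerivBoundedOn n Φ s X L)
    (m n : ℕ) : DerivBoundedOn n ((ibpStep g)^[m] Φ) s (ibpConst m n * X * (M * L) ^ m) L := by
  induction m generalizing n with
  | zero => simpa [ibpConst] using hΦb n
  | succ m ih =>
    rw [Function.iterate_succ_apply']
    convert (hgb (n + 1)).ibpStep (contDiff_infty.mp hg _)
      (contDiff_infty.mp (contDiff_iterate_ibpStep hg hΦ m) _) (ih (n + 1)) using 1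
    rw [ibpConst]
    ring

lemma norm_integral_le_of_support_subset {α E : Type*} [MeasurableSpace α] [NormedAddCommGroup E]
    [NormedSpace ℝ E] {μ : Measure α} {f : α → E} {s : Set α} {C : ℝ} (hs : μ s < ⊤)
    (hf : Function.support f ⊆ s) (hC : ∀ x ∈ s, ‖f x‖ ≤ C) : ‖∫ x, f x ∂μ‖ ≤ C * μ.real s := by
  rw [← setIntegral_eq_integral_of_forall_compl_eq_zero fun x hx =>
    Function.notMem_support.mp fun h => hx (hf h)]
  exact norm_setIntegral_le_of_norm_le_const hs hC

theorem norm_integral_mul_exp_le {w : ℝ → ℂ} {h : ℝ → ℝ} {K : Set ℝ} {X R L : ℝ} (n : ℕ)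
    (hK : IsCompact K) (hR : 0 < R) (hL : 0 ≤ L) (hw : ContDiff ℝ ∞ w)
    (hwK : Function.support w ⊆ K) (hwb : ∀ k, DerivBoundedOn k w K X L) (hh : ContDiff ℝ ∞ h)
    (hh1 : ∀ t ∈ K, R ≤ |deriv h t|) (hh2 : ∀ k, DerivBoundedOn k (deriv (deriv h)) K (R * L) L) :
    ‖∫ t, w t * exp (I * h t)‖ ≤ ibpConst n 0 * X * (L / R) ^ n * volume.real K := by
  have hdh : ContDiff ℝ ∞ (deriv h) := (contDiff_infty_iff_deriv.mp hh).2
  have hdh0 : ∀ t ∈ K, deriv h t ≠ 0 := fun t ht h0 => by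
    have := hh1 t ht
    rw [h0, abs_zero] at this
    exact hR.not_ge this
  obtain ⟨G, hG, hGinv⟩ := exists_contDiff_eventuallyEq_inv hdh hK.isClosed hdh0
  have hGh : ∀ t ∈ K, G t * deriv h t = 1 := fun t ht => by
    rw [hGinv.self_of_nhdsSet ht, inv_mul_cancel₀ (hdh0 t ht)]
  have hGb : ∀ k, DerivBoundedOn k G K (riccatiConst k * R⁻¹) L :=
    derivBoundedOn_of_deriv_eq_mul_sq hG (contDiff_infty_iff_deriv.mp hdh).2.neg
      (deriv_eventuallyEq_of_eventuallyEq_inv (hdh.of_le (by simp)) hdh0 hGinv)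
      (fun t ht => by
        rw [hGinv.self_of_nhdsSet ht, norm_inv, Real.norm_eq_abs]
        exact inv_anti₀ hR (hh1 t ht))
      (fun k => (hh2 k).neg) (by rw [mul_right_comm, mul_inv_cancel₀ hR.ne', one_mul])
      (inv_nonneg.mpr hR.le) hL
  have hwK' : tsupport w ⊆ K := closure_minimal hwK hK.isClosed
  rw [integral_mul_exp_eq_I_pow_mul_integral_iterate_ibpStep hK hG hw (hh.of_le (by simp)) hwK'
    hGh n, norm_mul, norm_pow, norm_I, one_pow, one_mul]
  refine norm_integral_le_of_support_subset hK.measure_lt_top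
    ((Function.support_mul_subset_left _ _).trans
      ((subset_tsupport _).trans ((tsupport_iterate_ibpStep_subset G w n).trans hwK'))) ?_
  intro t ht
  rw [norm_mul, norm_exp_I_mul_ofReal, mul_one, div_eq_inv_mul]
  exact (derivBoundedOn_iterate_ibpStep hG hw hGb hwb n 0).norm_le ht

lemma derivBoundedOn_of_norm_iteratedDeriv_le_zpow {F : Type*} [NormedAddCommGroup F]
    [NormedSpace ℝ F] {f : ℝ → F} {s : Set ℝ} {X U V : ℝ}
    (hf : ∀ (j : ℕ) (t : ℝ), ‖iteratedDeriv j f t‖ ≤ X * U ^ (-(j : ℤ))) (hV : 0 < V)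
    (hVU : V ≤ U) (n : ℕ) : DerivBoundedOn n f s X V⁻¹ := by
  have hX : 0 ≤ X := by simpa using (norm_nonneg _).trans (hf 0 0)
  intro j _ t _
  calc ‖iteratedDeriv j f t‖ ≤ X * U⁻¹ ^ j := by simpa [zpow_neg, inv_pow] using hf j t
    _ ≤ X * V⁻¹ ^ j := by
      gcongr
      exact inv_nonneg.mpr (hV.le.trans hVU)

lemma derivBoundedOn_deriv_deriv_of_abs_iteratedDeriv_le {h : ℝ → ℝ} {s : Set ℝ} {Y Q R V : ℝ}
    (hh : ∀ j : ℕ, 2 ≤ j → ∀ t ∈ s, |iteratedDeriv j h t| ≤ Y * Q ^ (-(j : ℤ))) (hY : 1 ≤ Y)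
    (hV : 0 < V) (hVQ : V ≤ Q / √Y) (hRV : 1 ≤ R * V) (n : ℕ) :
    DerivBoundedOn n (deriv (deriv h)) s (R * V⁻¹) V⁻¹ := by
  have hsY : 1 ≤ √Y := Real.one_le_sqrt.mpr hY
  have hQ : 0 < Q := (div_pos_iff_of_pos_right (by positivity)).mp (hV.trans_le hVQ)
  have hVQ' : V ≤ Q := hVQ.trans (div_le_self hQ.le hsY)
  intro j _ t ht
  rw [← iteratedDeriv_succ', ← iteratedDeriv_succ', Real.norm_eq_abs]
  calc |iteratedDeriv (j + 2) h t| ≤ Y * Q ^ (-((j + 2 : ℕ) : ℤ)) := hh (j + 2) (by omega) t ht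
    _ = (Q / √Y)⁻¹ ^ 2 * Q⁻¹ ^ j := by
      rw [zpow_neg, zpow_natCast, inv_div, div_pow, Real.sq_sqrt (by linarith), inv_pow]
      field_simp
      ring
    _ ≤ V⁻¹ ^ 2 * V⁻¹ ^ j := by gcongr
    _ ≤ R * V⁻¹ * V⁻¹ ^ j := by
      rw [sq]
      gcongr
      exact (inv_le_iff_one_le_mul₀ hV).mpr hRV

theorem norm_integral_mul_exp_le_rpow_neg {A α β X U R Q Y V : ℝ} {w : ℝ → ℂ} {h : ℝ → ℝ}
    (hA : 0 ≤ A) (hαβ : α ≤ β) (hR : 0 < R) (hY : 1 ≤ Y) (hV : 0 < V) (hVU : V ≤ U)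
    (hVQ : V ≤ Q / √Y) (hw : ContDiff ℝ ∞ w) (hwK : Function.support w ⊆ Icc α β)
    (hwb : ∀ (j : ℕ) (t : ℝ), ‖iteratedDeriv j w t‖ ≤ X * U ^ (-(j : ℤ)))
    (hh : ContDiff ℝ ∞ h) (hh1 : ∀ t ∈ Icc α β, R ≤ |deriv h t|)
    (hh2 : ∀ j : ℕ, 2 ≤ j → ∀ t ∈ Icc α β, |iteratedDeriv j h t| ≤ Y * Q ^ (-(j : ℤ))) :
    ‖∫ t, w t * exp (I * h t)‖ ≤ ibpConst ⌈A⌉₊ 0 * (β - α) * X * (R * V) ^ (-A) := by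
  have hwb' := derivBoundedOn_of_norm_iteratedDeriv_le_zpow (s := Icc α β) hwb hV hVU
  have hX : 0 ≤ X := (norm_nonneg _).trans ((hwb' 0).norm_le (left_mem_Icc.mpr hαβ))
  have hC := one_le_ibpConst ⌈A⌉₊ 0
  rw [← Real.volume_real_Icc_of_le hαβ]
  rcases le_or_gt (R * V) 1 with hRV | hRV
  · calc ‖∫ t, w t * exp (I * h t)‖ ≤ X * volume.real (Icc α β) :=
          norm_integral_le_of_support_subset measure_Icc_lt_top
            ((Function.support_mul_subset_left _ _).trans hwK) fun t ht => by
              rw [norm_mul, norm_exp_I_mul_ofReal, mul_one]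
              exact (hwb' 0).norm_le ht
      _ = 1 * volume.real (Icc α β) * X * 1 := by ring
      _ ≤ ibpConst ⌈A⌉₊ 0 * volume.real (Icc α β) * X * (R * V) ^ (-A) := by
          gcongr
          exact Real.one_le_rpow_of_pos_of_le_one_of_nonpos (by positivity) hRV (by linarith)
  · calc ‖∫ t, w t * exp (I * h t)‖
          ≤ ibpConst ⌈A⌉₊ 0 * X * (V⁻¹ / R) ^ ⌈A⌉₊ * volume.real (Icc α β) :=
          norm_integral_mul_exp_le ⌈A⌉₊ isCompact_Icc hR (inv_nonneg.mpr hV.le) hw hwK hwb' hh hh1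
            (derivBoundedOn_deriv_deriv_of_abs_iteratedDeriv_le hh2 hY hV hVQ hRV.le)
      _ = ibpConst ⌈A⌉₊ 0 * volume.real (Icc α β) * X * (R * V) ^ (-(⌈A⌉₊ : ℝ)) := by
          rw [Real.rpow_neg (by positivity), Real.rpow_natCast, ← inv_pow, mul_inv_rev,
            ← div_eq_mul_inv]
          ring
      _ ≤ ibpConst ⌈A⌉₊ 0 * volume.real (Icc α β) * X * (R * V) ^ (-A) := by
          gcongr
          exacts [hRV.le, Nat.le_ceil A]

theorem oscillatory_integral_bound :
    ∀ A : ℝ, 0 < A → ∃ C : ℝ, 0 < C ∧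
      ∀ (α β X U R Q Y : ℝ) (w : ℝ → ℂ) (h : ℝ → ℝ),
        α < β → 0 < X → 0 < U → 0 < R → 0 < Q → 1 ≤ Y →
        ContDiff ℝ (⊤ : ℕ∞) w →
        Function.support w ⊆ Set.Icc α β →
        (∀ (j : ℕ) (t : ℝ), ‖iteratedDeriv j w t‖ ≤ X * U ^ (-(j : ℤ))) →
        ContDiff ℝ (⊤ : ℕ∞) h →
        (∀ t ∈ Set.Icc α β, R ≤ |deriv h t|) →
        (∀ j : ℕ, 2 ≤ j → ∀ t ∈ Set.Icc α β, |iteratedDeriv j h t| ≤ Y * Q ^ (-(j : ℤ))) →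
        ‖∫ t : ℝ, w t * Complex.exp (Complex.I * (h t : ℂ))‖
          ≤ C * (β - α) * X * ((Q * R / Real.sqrt Y) ^ (-A) + (R * U) ^ (-A)) := by
  intro A hA
  have hC : 0 < ibpConst ⌈A⌉₊ 0 := one_pos.trans_le (one_le_ibpConst _ _)
  refine ⟨ibpConst ⌈A⌉₊ 0, hC, ?_⟩
  intro α β X U R Q Y w h hαβ hX hU hR hQ hY hw hwK hwb hh hh1 hh2
  have hV : 0 < min U (Q / √Y) := lt_min hU (by positivity)
  refine (norm_integral_mul_exp_le_rpow_neg hA.le hαβ.le hR hY hV (min_le_left _ _)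
    (min_le_right _ _) hw hwK hwb hh hh1 hh2).trans
    (mul_le_mul_of_nonneg_left ?_ (by have := sub_pos.mpr hαβ; positivity))
  rcases min_cases U (Q / √Y) with ⟨hmin, -⟩ | ⟨hmin, -⟩ <;> rw [hmin]
  · exact le_add_of_nonneg_left (by positivity)
  · rw [show R * (Q / √Y) = Q * R / √Y by ring]
    exact le_add_of_nonneg_right (by positivity)
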